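/- Suppose (g,K,θ) satisfies condition (E), g(K) ⊆ K, and g⁻¹(K) = K. Then for every β ∈ (0, θ/2], every infinite β-pseudoorbit (x_n)_{n=0}^∞ for g contained in B(K, θ/4) is β-shadowed by a unique element of K: there exists exactly one x ∈ K with ρ(g^n(x), x_n) ≤ β for all n ≥ 0. -/

import Mathlib

/-- Condition (E): for every `x` in the closed `θ`-neighborhood of `K` and every `y`
with `ρ(x,y) ≤ θ`, one has `ρ(g(x),g(y)) ≥ 2ρ(x,y)`; moreover `g` is injective on
`B(x,θ)` and `g(B(x,θ)) ⊇ B(g(x),2θ)`. -/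
def CondE {Z : Type*} [MetricSpace Z] (g : Z → Z) (K : Set Z) (θ : ℝ) : Prop :=
  ∀ x : Z, Metric.infDist x K ≤ θ →
    (∀ y : Z, dist x y ≤ θ → 2 * dist x y ≤ dist (g x) (g y)) ∧
    Set.InjOn g (Metric.ball x θ) ∧
    Metric.ball (g x) (2 * θ) ⊆ g '' Metric.ball x θ

/-!
Near `K`, condition (E) gives `g` local inverse branches contracting by `1/2`. Pulling a point
of `K` near `x N` back along the pseudo-orbit gives a point of `K` whose orbit follows
`x 0, …, x N` with an error exceeding `β` by `O(2 ^ (n - N))` at time `n`; a cluster point of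
these points, as `N → ∞`, `β`-shadows the whole pseudo-orbit. Two orbits staying `θ`-close are pushed apart by
the factor `2` at every step, so they coincide.
-/

open Filter Topology Metric

section

variable {Z : Type*} [MetricSpace Z] {g : Z → Z} {K : Set Z} {θ : ℝ}

namespace CondE

theorem two_pow_mul_dist_le (hE : CondE g K θ) {p q : Z} {m : ℕ}
    (h : ∀ i < m, infDist (g^[i] p) K ≤ θ ∧ dist (g^[i] p) (g^[i] q) ≤ θ) :
    2 ^ m * dist p q ≤ dist (g^[m] p) (g^[m] q) := by
  induction m with
  | zero => simp
  | succ m ih =>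
    have hm := h m m.lt_succ_self
    rw [Function.iterate_succ_apply', Function.iterate_succ_apply', pow_succ']
    calc 2 * 2 ^ m * dist p q ≤ 2 * dist (g^[m] p) (g^[m] q) := by
          rw [mul_assoc]; gcongr; exact ih fun i hi => h i (hi.trans m.lt_succ_self)
      _ ≤ _ := (hE _ hm.1).1 _ hm.2

theorem eq_of_forall_dist_iterate_le (hE : CondE g K θ) {p q : Z}
    (hnear : ∀ n, infDist (g^[n] p) K ≤ θ) (hclose : ∀ n, dist (g^[n] p) (g^[n] q) ≤ θ) :
    p = q := by
  by_contra hpq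
  have hpos : 0 < dist p q := dist_pos.mpr hpq
  obtain ⟨m, hm⟩ := pow_unbounded_of_one_lt (θ / dist p q) one_lt_two
  have hexp := hE.two_pow_mul_dist_le (m := m) fun i _ => ⟨hnear i, hclose i⟩
  rw [div_lt_iff₀ hpos] at hm
  linarith [hclose m]

theorem exists_preimage_dist_le (hE : CondE g K θ) {a z : Z} (ha : infDist a K ≤ θ)
    (hz : dist (g a) z < 2 * θ) : ∃ w, g w = z ∧ 2 * dist a w ≤ dist (g a) z := by
  obtain ⟨hexpand, -, hsurj⟩ := hE a ha
  obtain ⟨w, hw, rfl⟩ := hsurj (mem_ball'.mpr hz)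
  exact ⟨w, rfl, hexpand w (mem_ball'.mp hw).le⟩

theorem exists_iterate_eq_of_dist_le (hE : CondE g K θ) (hθ : 0 < θ) {β δ : ℝ} {x : ℕ → Z}
    (hpseudo : ∀ n, dist (g (x n)) (x (n + 1)) ≤ β) (hnear : ∀ n, infDist (x n) K ≤ θ)
    {N : ℕ} {z : Z} (hδ : 0 ≤ δ) (hβδ : β + δ ≤ θ / 2) (hz : dist z (x N) ≤ β + δ) :
    ∃ p, g^[N] p = z ∧ ∀ n ≤ N, dist (g^[n] p) (x n) ≤ β + δ / 2 ^ (N - n) := by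
  induction N generalizing δ z with
  | zero => exact ⟨z, rfl, fun n hn => by simpa [Nat.le_zero.mp hn] using hz⟩
  | succ N ih =>
    have hgz : dist (g (x N)) z < 2 * θ := by
      linarith [dist_triangle (g (x N)) (x (N + 1)) z, hpseudo N, dist_comm z (x (N + 1))]
    obtain ⟨w, rfl, hw⟩ := hE.exists_preimage_dist_le (hnear N) hgz
    have hwx : dist w (x N) ≤ β + δ / 2 := by
      linarith [dist_triangle (g (x N)) (x (N + 1)) (g w), hpseudo N,
        dist_comm (g w) (x (N + 1)), dist_comm w (x N)]
    obtain ⟨p, rfl, hp⟩ := ih (by positivity) (by linarith) hwx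
    refine ⟨p, Function.iterate_succ_apply' g N p, fun n hn => ?_⟩
    rcases hn.eq_or_lt with rfl | hn
    · simpa [Function.iterate_succ_apply'] using hz
    · rw [Nat.succ_sub (Nat.lt_succ_iff.mp hn), pow_succ', ← div_div]
      exact hp n (Nat.lt_succ_iff.mp hn)

end CondE

theorem IsCompact.exists_mem_forall_dist_iterate_le (hK : IsCompact K) (hg : Continuous g)
    {x : ℕ → Z} {β : ℝ} {p : ℕ → Z} (hpK : ∀ N, p N ∈ K) {b : ℕ → ℕ → ℝ}
    (hb : ∀ n, Tendsto (b n) atTop (𝓝 β))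
    (hp : ∀ n, ∀ᶠ N in atTop, dist (g^[n] (p N)) (x n) ≤ b n N) :
    ∃ q ∈ K, ∀ n, dist (g^[n] q) (x n) ≤ β := by
  obtain ⟨q, hqK, φ, hφ, hlim⟩ := hK.tendsto_subseq hpK
  refine ⟨q, hqK, fun n => le_of_tendsto_of_tendsto ?_ ((hb n).comp hφ.tendsto_atTop)
    (hφ.tendsto_atTop.eventually (hp n))⟩
  exact (((hg.iterate n).tendsto q).comp hlim).dist tendsto_const_nhds

theorem tendsto_add_div_two_pow_sub (β δ : ℝ) (n : ℕ) :
    Tendsto (fun N : ℕ => β + δ / 2 ^ (N - n)) atTop (𝓝 β) := by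
  simpa using (tendsto_const_nhds (x := β)).add <| (tendsto_const_nhds (x := δ)).div_atTop <|
    (tendsto_pow_atTop_atTop_of_one_lt one_lt_two).comp (tendsto_sub_atTop_nat n)

end

theorem stmt6_general {Z : Type*} [MetricSpace Z]
    (g : Z → Z) (hg : Continuous g)
    (K : Set Z) (hK : IsCompact K) (hKne : K.Nonempty)
    (θ : ℝ) (hθ : 0 < θ) (hE : CondE g K θ)
    (hpre : g ⁻¹' K = K)
    (β : ℝ) (hβθ : β ≤ θ / 2)
    (x : ℕ → Z)
    (hpseudo : ∀ n : ℕ, dist (g (x n)) (x (n + 1)) ≤ β)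
    (hin : ∀ n : ℕ, Metric.infDist (x n) K < θ / 4) :
    ∃! p : Z, p ∈ K ∧ ∀ n : ℕ, dist (g^[n] p) (x n) ≤ β := by
  have hnear (n : ℕ) : infDist (x n) K ≤ θ := by linarith [hin n]
  -- `β + δ = max β (θ / 4)` bounds both the starting error and every later one.
  set δ := max 0 (θ / 4 - β)
  have hstart (N : ℕ) : ∃ k ∈ K, dist k (x N) ≤ β + δ := by
    obtain ⟨k, hk, hkx⟩ := (infDist_lt_iff hKne).mp (hin N)
    exact ⟨k, hk, by linarith [dist_comm k (x N), le_max_right 0 (θ / 4 - β)]⟩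
  choose k hkK hkx using hstart
  have hδβ : β + δ ≤ θ / 2 := by
    linarith [show δ ≤ θ / 2 - β from max_le (by linarith) (by linarith)]
  choose p hpk hpx using fun N =>
    hE.exists_iterate_eq_of_dist_le hθ hpseudo hnear (le_max_left _ _) hδβ (hkx N)
  have hpK (N : ℕ) : p N ∈ K := by
    rw [← Function.IsFixedPt.preimage_iterate hpre N]
    exact (hpk N ▸ hkK N :)
  obtain ⟨q, hqK, hq⟩ := hK.exists_mem_forall_dist_iterate_le hg hpK
    (tendsto_add_div_two_pow_sub β δ) fun n =>
      (eventually_ge_atTop n).mono fun N hN => hpx N n hN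
  refine ⟨q, ⟨hqK, hq⟩, fun r ⟨_, hr⟩ =>
    (hE.eq_of_forall_dist_iterate_le (fun n => ?_) fun n => ?_).symm⟩
  · linarith [infDist_le_infDist_add_dist (x := g^[n] q) (y := x n) (s := K), hin n, hq n]
  · linarith [dist_triangle_right (g^[n] q) (g^[n] r) (x n), hq n, hr n]

/-- Proposition 4.7 (shadowing lemma): every infinite `β`-pseudoorbit (with
`β ∈ (0, θ/2]`) contained in the open `θ/4`-neighborhood of `K` is `β`-shadowed
by a unique element of `K`. -/
theorem stmt6 {Z : Type*} [MetricSpace Z] [CompactSpace Z]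
    (g : Z → Z) (hg : Continuous g)
    (K : Set Z) (hK : IsCompact K) (hKne : K.Nonempty)
    (θ : ℝ) (hθ : 0 < θ) (hE : CondE g K θ)
    (hmaps : Set.MapsTo g K K) (hpre : g ⁻¹' K = K)
    (β : ℝ) (hβ : 0 < β) (hβθ : β ≤ θ / 2)
    (x : ℕ → Z)
    (hpseudo : ∀ n : ℕ, dist (g (x n)) (x (n + 1)) ≤ β)
    (hin : ∀ n : ℕ, Metric.infDist (x n) K < θ / 4) :
    ∃! p : Z, p ∈ K ∧ ∀ n : ℕ, dist (g^[n] p) (x n) ≤ β :=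
  stmt6_general g hg K hK hKne θ hθ hE hpre β hβθ x hpseudo hin
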